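/- arXiv:1902.08744 — 3 statements merged into one kernel-verified Lean document; each statement's English description precedes it below -/
import Mathlib

section
/- Let h : (F_2)^m → F_2 be a feedback function whose FSR generates a de Bruijn sequence of order m, and let n > m ≥ 2. Define f : (F_2)^n → F_2 by f(x_0,...,x_{n-1}) = h(x_{n-m},...,x_{n-1}). Then in the state graph G_f, every vertex that is not a leaf has exactly two children, and for every state v there is a directed path from v to any fixed state b lying on the unique cycle of G_f (the cycle consisting of the 2^m n-stage states of the de Bruijn sequence of order m extended periodically). -/
/-- The state map of an `n`-stage FSR with feedback function `f`. -/
def stateMap (n : ℕ) (f : (Fin n → ZMod 2) → ZMod 2) (x : Fin n → ZMod 2) :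
    Fin n → ZMod 2 :=
  fun i => if h : (i : ℕ) + 1 < n then x ⟨(i : ℕ) + 1, h⟩ else f x

/-- `f(x_0, ..., x_{n-1}) = h(x_{n-m}, ..., x_{n-1})`. -/
def extendF (m n : ℕ) (hmn : m < n) (h : (Fin m → ZMod 2) → ZMod 2) :
    (Fin n → ZMod 2) → ZMod 2 :=
  fun x => h (fun j => x ⟨n - m + (j : ℕ), by have := j.isLt; omega⟩)

/-!
The feedback `f` reads only the last `m` coordinates, so (i) it ignores `x 0`, and a state `v` has
as predecessors either no state or both states `(c, v 0, …, v (n-2))`; and (ii) the last `m`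
coordinates of an orbit of `G_f` follow the de Bruijn register of `h`, while after `n - m` steps the
whole state depends only on them. A state `b` on a cycle is `F^[n-m] b'` for some `b'`; the orbit of
any `v` reaches a state with the same last `m` coordinates as `b'`, and `n - m` steps later it is `b`.
-/

open Function Set

theorem card_filter_tail_eq {α : Type*} [Fintype α] [DecidableEq α] {k : ℕ} (p : Fin k → α) :
    (Finset.univ.filter fun u : Fin (k + 1) → α => Fin.tail u = p).card = Fintype.card α := by
  have hfib : (Finset.univ.filter fun u : Fin (k + 1) → α => Fin.tail u = p) =
      Finset.univ.image fun c => (Fin.cons c p : Fin (k + 1) → α) := by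
    ext u
    simp only [Finset.mem_filter, Finset.mem_univ, true_and, Finset.mem_image]
    constructor
    · rintro rfl
      exact ⟨u 0, Fin.cons_self_tail u⟩
    · rintro ⟨c, rfl⟩
      exact Fin.tail_cons (α := fun _ => α) c p
  rw [hfib, Finset.card_image_of_injective _ (Fin.cons_left_injective (α := fun _ => α) p),
    Finset.card_univ]

theorem stateMap_succ_eq_snoc {k : ℕ} (f : (Fin (k + 1) → ZMod 2) → ZMod 2)
    (x : Fin (k + 1) → ZMod 2) : stateMap (k + 1) f x = Fin.snoc (Fin.tail x) (f x) := by
  funext i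
  simp only [stateMap, Fin.snoc, Fin.tail]
  split_ifs <;> first | rfl | omega

theorem stateMap_succ_eq_iff {k : ℕ} (f : (Fin (k + 1) → ZMod 2) → ZMod 2)
    (u v : Fin (k + 1) → ZMod 2) :
    stateMap (k + 1) f u = v ↔ Fin.tail u = Fin.init v ∧ f u = v (Fin.last k) := by
  rw [stateMap_succ_eq_snoc, ← Fin.snoc_init_self v, Fin.snoc_inj, Fin.init_snoc, Fin.snoc_last]

theorem card_fiber_stateMap_eq_zero_or_two {k : ℕ} {f : (Fin (k + 1) → ZMod 2) → ZMod 2}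
    (hf : DependsOn f {0}ᶜ) (v : Fin (k + 1) → ZMod 2) :
    (Finset.univ.filter fun u => stateMap (k + 1) f u = v).card = 0 ∨
      (Finset.univ.filter fun u => stateMap (k + 1) f u = v).card = 2 := by
  have hf_tail : ∀ u, f u = f (Fin.cons 0 (Fin.tail u)) := by
    refine fun u => hf fun i hi => ?_
    obtain ⟨j, rfl⟩ := Fin.exists_succ_eq.mpr hi
    rfl
  have hfib : (Finset.univ.filter fun u => stateMap (k + 1) f u = v) =
      Finset.univ.filter fun u => Fin.tail u = Fin.init v ∧
        f (Fin.cons 0 (Fin.init v)) = v (Fin.last k) := by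
    ext u
    simp only [Finset.mem_filter, Finset.mem_univ, true_and, stateMap_succ_eq_iff]
    constructor
    · rintro ⟨hu, hv⟩
      exact ⟨hu, by rwa [hf_tail, hu] at hv⟩
    · rintro ⟨hu, hv⟩
      exact ⟨hu, by rwa [hf_tail, hu]⟩
  by_cases hv : f (Fin.cons 0 (Fin.init v)) = v (Fin.last k)
  · simp [hfib, hv, card_filter_tail_eq]
  · simp [hfib, hv]

theorem stateMap_eqOn_of_eqOn {n d : ℕ} {f : (Fin n → ZMod 2) → ZMod 2}
    (hf : DependsOn f {j | d ≤ (j : ℕ)}) {x y : Fin n → ZMod 2}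
    (hxy : EqOn x y {j | d ≤ (j : ℕ)}) :
    EqOn (stateMap n f x) (stateMap n f y) {j | d - 1 ≤ (j : ℕ)} := by
  intro j (hj : d - 1 ≤ (j : ℕ))
  simp only [stateMap]
  split_ifs with hjn
  · exact hxy (show d ≤ (j : ℕ) + 1 by omega)
  · exact hf hxy

theorem iterate_stateMap_eqOn {n d : ℕ} {f : (Fin n → ZMod 2) → ZMod 2}
    (hf : DependsOn f {j | d ≤ (j : ℕ)}) {x y : Fin n → ZMod 2}
    (hxy : EqOn x y {j | d ≤ (j : ℕ)}) (t : ℕ) :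
    EqOn ((stateMap n f)^[t] x) ((stateMap n f)^[t] y) {j | d - t ≤ (j : ℕ)} := by
  induction t with
  | zero => exact hxy
  | succ t ih =>
    rw [iterate_succ_apply', iterate_succ_apply', ← Nat.sub_sub]
    refine stateMap_eqOn_of_eqOn (hf.mono fun j (hj : d ≤ (j : ℕ)) => ?_) ih
    show d - t ≤ (j : ℕ)
    omega

theorem iterate_stateMap_eq_of_eqOn {n d : ℕ} {f : (Fin n → ZMod 2) → ZMod 2}
    (hf : DependsOn f {j | d ≤ (j : ℕ)}) {x y : Fin n → ZMod 2}
    (hxy : EqOn x y {j | d ≤ (j : ℕ)}) :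
    (stateMap n f)^[d] x = (stateMap n f)^[d] y :=
  funext fun j => iterate_stateMap_eqOn hf hxy d (show d - d ≤ (j : ℕ) by omega)

def lastCoords (m n : ℕ) (hmn : m ≤ n) (x : Fin n → ZMod 2) : Fin m → ZMod 2 :=
  fun j => x ⟨n - m + (j : ℕ), by omega⟩

theorem eqOn_of_lastCoords_eq {m n : ℕ} (hmn : m ≤ n) {x y : Fin n → ZMod 2}
    (hxy : lastCoords m n hmn x = lastCoords m n hmn y) : EqOn x y {j | n - m ≤ (j : ℕ)} := by
  intro j (hj : n - m ≤ (j : ℕ))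
  have := congrFun hxy ⟨j - (n - m), by omega⟩
  simp only [lastCoords] at this
  convert this using 2 <;> ext <;> simp only <;> omega

theorem dependsOn_extendF {m n : ℕ} (hmn : m < n) (h : (Fin m → ZMod 2) → ZMod 2) :
    DependsOn (extendF m n hmn h) {j | n - m ≤ (j : ℕ)} :=
  fun _ _ hxy => congrArg h (funext fun _ => hxy _ (Nat.le_add_right _ _))

theorem semiconj_lastCoords {m n : ℕ} (hmn : m < n) (h : (Fin m → ZMod 2) → ZMod 2) :
    Semiconj (lastCoords m n hmn.le) (stateMap n (extendF m n hmn h)) (stateMap m h) := by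
  intro x
  funext j
  simp only [lastCoords, stateMap]
  split_ifs with hn hm hm
  · exact congrArg x (Fin.ext (by simp only; omega))
  · omega
  · omega
  · rfl

theorem exists_iterate_stateMap_extendF_eq {m n : ℕ} (hmn : m < n)
    {h : (Fin m → ZMod 2) → ZMod 2}
    (hdb : ∀ x y : Fin m → ZMod 2, ∃ k : ℕ, (stateMap m h)^[k] x = y)
    {k : ℕ} (hk : 0 < k) {b : Fin n → ZMod 2}
    (hb : IsPeriodicPt (stateMap n (extendF m n hmn h)) k b) (v : Fin n → ZMod 2) :
    ∃ t, (stateMap n (extendF m n hmn h))^[t] v = b := by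
  obtain ⟨b', rfl⟩ : b ∈ range (stateMap n (extendF m n hmn h))^[n - m] :=
    periodicPts_subset_range (mk_mem_periodicPts hk (hb.iterate _))
  obtain ⟨s, hs⟩ := hdb (lastCoords m n hmn.le v) (lastCoords m n hmn.le b')
  refine ⟨n - m + s, ?_⟩
  rw [iterate_add_apply]
  refine iterate_stateMap_eq_of_eqOn (dependsOn_extendF hmn h) (eqOn_of_lastCoords_eq hmn.le ?_)
  rw [((semiconj_lastCoords hmn h).iterate_right s).eq, hs]

theorem stmt5_general (m n : ℕ) (hmn : m < n)
    (h : (Fin m → ZMod 2) → ZMod 2)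
    -- the FSR with feedback function `h` generates a de Bruijn sequence of order `m`:
    -- its state map visits all `2^m` states in one cycle
    (hdb : ∀ x y : Fin m → ZMod 2, ∃ k : ℕ, (stateMap m h)^[k] x = y) :
    -- every non-leaf vertex of `G_f` has exactly two children
    (∀ v : Fin n → ZMod 2,
      (Finset.univ.filter fun u => stateMap n (extendF m n hmn h) u = v).card = 0 ∨
      (Finset.univ.filter fun u => stateMap n (extendF m n hmn h) u = v).card = 2) ∧
    -- from every state there is a directed path to any state `b` on the unique cycle
    (∀ v b : Fin n → ZMod 2,
      (∃ k : ℕ, 0 < k ∧ (stateMap n (extendF m n hmn h))^[k] b = b) →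
      ∃ k : ℕ, (stateMap n (extendF m n hmn h))^[k] v = b) := by
  refine ⟨fun v => ?_, fun v b ⟨k, hk, hb⟩ => exists_iterate_stateMap_extendF_eq hmn hdb hk hb v⟩
  obtain ⟨n, rfl⟩ : ∃ n', n = n' + 1 := ⟨n - 1, by omega⟩
  have hf : DependsOn (extendF m (n + 1) hmn h) {0}ᶜ :=
    (dependsOn_extendF hmn h).mono fun j (hj : n + 1 - m ≤ (j : ℕ)) (h0 : j = 0) => by
      subst h0
      simp only [Fin.val_zero] at hj
      omega
  exact card_fiber_stateMap_eq_zero_or_two hf v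

theorem stmt5 (m n : ℕ) (hm : 2 ≤ m) (hmn : m < n)
    (h : (Fin m → ZMod 2) → ZMod 2)
    -- the FSR with feedback function `h` generates a de Bruijn sequence of order `m`:
    -- its state map visits all `2^m` states in one cycle
    (hdb : ∀ x y : Fin m → ZMod 2, ∃ k : ℕ, (stateMap m h)^[k] x = y) :
    -- every non-leaf vertex of `G_f` has exactly two children
    (∀ v : Fin n → ZMod 2,
      (Finset.univ.filter fun u => stateMap n (extendF m n hmn h) u = v).card = 0 ∨
      (Finset.univ.filter fun u => stateMap n (extendF m n hmn h) u = v).card = 2) ∧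
    -- from every state there is a directed path to any state `b` on the unique cycle
    (∀ v b : Fin n → ZMod 2,
      (∃ k : ℕ, 0 < k ∧ (stateMap n (extendF m n hmn h))^[k] b = b) →
      ∃ k : ℕ, (stateMap n (extendF m n hmn h))^[k] v = b) :=
  stmt5_general m n hmn h hdb
end

section
/- Fix n ≥ 2 and an integer t with 0 < t < n, and let f(x_0,...,x_{n-1}) = 1 + x_t · x_{t+1} · ... · x_{n-1} over F_2. Then the set of periodic states of the state map of f (states lying on directed cycles of G_f) is exactly the set of n-stage states of the periodic sequence (0, 1^{n-t}) of period n-t+1, and they form a single directed cycle of length n-t+1. -/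
/-- The periodic binary sequence of period `p` consisting of one `0` followed by
`p - 1` ones. -/
def zeroOnesSeq (p : ℕ) (i : ℕ) : ZMod 2 := if i % p = 0 then 0 else 1

open Function

lemma zeroOnesSeq_eq_zero_iff {p i : ℕ} : zeroOnesSeq p i = 0 ↔ p ∣ i := by
  rw [Nat.dvd_iff_mod_eq_zero, zeroOnesSeq]; split_ifs <;> simp [*]

lemma zeroOnesSeq_periodic (p : ℕ) : Periodic (zeroOnesSeq p) p := by
  intro i; simp [zeroOnesSeq]

section FSR

variable {n : ℕ} {f : (Fin n → ZMod 2) → ZMod 2} {s : ℕ → ZMod 2}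

def seqWindow (n : ℕ) (s : ℕ → ZMod 2) (m : ℕ) : Fin n → ZMod 2 := fun i => s (m + i)

def IsFSRSequence (n : ℕ) (f : (Fin n → ZMod 2) → ZMod 2) (s : ℕ → ZMod 2) : Prop :=
  ∀ m, s (m + n) = f (seqWindow n s m)

lemma seqWindow_add_of_periodic {p : ℕ} (hs : Periodic s p) (m : ℕ) :
    seqWindow n s (m + p) = seqWindow n s m := by
  funext i; simp only [seqWindow, add_right_comm m p, hs _]

lemma IsFSRSequence.stateMap_seqWindow (hs : IsFSRSequence n f s) (m : ℕ) :
    stateMap n f (seqWindow n s m) = seqWindow n s (m + 1) := by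
  funext i
  simp only [stateMap, seqWindow]
  split_ifs with h
  · simp only [add_assoc, add_comm 1]
  · rw [← hs m]; congr 1; omega

lemma IsFSRSequence.iterate_stateMap_seqWindow (hs : IsFSRSequence n f s) (m j : ℕ) :
    (stateMap n f)^[j] (seqWindow n s m) = seqWindow n s (m + j) := by
  induction j with
  | zero => rfl
  | succ j ih => rw [iterate_succ_apply', ih, hs.stateMap_seqWindow, add_assoc]

lemma IsFSRSequence.isPeriodicPt_seqWindow {p : ℕ} (hs : IsFSRSequence n f s)
    (hsp : Periodic s p) (m : ℕ) : IsPeriodicPt (stateMap n f) p (seqWindow n s m) := by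
  rw [IsPeriodicPt, IsFixedPt, hs.iterate_stateMap_seqWindow, seqWindow_add_of_periodic hsp]

variable [NeZero n]

def outputSeq (f : (Fin n → ZMod 2) → ZMod 2) (x : Fin n → ZMod 2) (m : ℕ) : ZMod 2 :=
  ((stateMap n f)^[m] x) 0

lemma iterate_stateMap_apply_zero (x : Fin n → ZMod 2) {j : ℕ} (hj : j < n) :
    ((stateMap n f)^[j] x) 0 = x ⟨j, hj⟩ := by
  induction j generalizing x with
  | zero => rfl
  | succ j ih => rw [iterate_succ_apply, ih _ (by omega), stateMap, dif_pos hj]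

lemma seqWindow_outputSeq (x : Fin n → ZMod 2) (m : ℕ) :
    seqWindow n (outputSeq f x) m = (stateMap n f)^[m] x := by
  funext i
  rw [seqWindow, outputSeq, add_comm, iterate_add_apply, iterate_stateMap_apply_zero _ i.isLt]

lemma isFSRSequence_outputSeq (x : Fin n → ZMod 2) : IsFSRSequence n f (outputSeq f x) := by
  intro m
  have hn := NeZero.pos n
  have hlast := congrFun (seqWindow_outputSeq (f := f) x (m + 1)) ⟨n - 1, by omega⟩
  rw [seqWindow, iterate_succ_apply', stateMap, dif_neg (by simp only [not_lt]; omega),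
    ← seqWindow_outputSeq] at hlast
  rwa [show m + 1 + (n - 1) = m + n by omega] at hlast

lemma IsFSRSequence.minimalPeriod_seqWindow_zeroOnesSeq {p : ℕ}
    (hs : IsFSRSequence n f (zeroOnesSeq p)) :
    minimalPeriod (stateMap n f) (seqWindow n (zeroOnesSeq p) 0) = p := by
  have isPeriodicPt_iff : ∀ j, IsPeriodicPt (stateMap n f) j (seqWindow n (zeroOnesSeq p) 0) ↔
      p ∣ j := by
    intro j
    rw [IsPeriodicPt, IsFixedPt, hs.iterate_stateMap_seqWindow, zero_add]
    constructor
    · intro h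
      have h0 := congrFun h 0
      simp only [seqWindow, Fin.val_zero, add_zero] at h0
      rw [← zeroOnesSeq_eq_zero_iff, h0, zeroOnesSeq_eq_zero_iff]
      exact dvd_zero p
    · rintro ⟨c, rfl⟩
      simpa only [Nat.cast_id, mul_comm, zero_add] using
        seqWindow_add_of_periodic ((zeroOnesSeq_periodic p).nat_mul c) 0
  exact Nat.dvd_antisymm (isPeriodicPt_iff_minimalPeriod_dvd.1 ((isPeriodicPt_iff p).2 dvd_rfl))
    ((isPeriodicPt_iff _).1 (isPeriodicPt_minimalPeriod _ _))

end FSR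

section TailProduct

variable {n t : ℕ} {s : ℕ → ZMod 2}

def tailProdFeedback (n t : ℕ) (x : Fin n → ZMod 2) : ZMod 2 :=
  1 + ∏ i : Fin n, if t ≤ (i : ℕ) then x i else 1

lemma tailProdFeedback_eq_zero_iff {x : Fin n → ZMod 2} :
    tailProdFeedback n t x = 0 ↔ ∀ i : Fin n, t ≤ (i : ℕ) → x i ≠ 0 := by
  have one_add_eq_zero : ∀ z : ZMod 2, 1 + z = 0 ↔ z ≠ 0 := by decide
  rw [tailProdFeedback, one_add_eq_zero, Finset.prod_ne_zero_iff]
  refine forall_congr' fun i => ?_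
  split_ifs <;> simp [*]

lemma IsFSRSequence.add_eq_zero_iff (hs : IsFSRSequence n (tailProdFeedback n t) s) (m : ℕ) :
    s (m + n) = 0 ↔ ∀ i, t ≤ i → i < n → s (m + i) ≠ 0 := by
  rw [hs m, tailProdFeedback_eq_zero_iff]
  exact ⟨fun h i hti hin => h ⟨i, hin⟩ hti, fun h i hti => h i hti i.isLt⟩

lemma IsFSRSequence.exists_eq_zero (hs : IsFSRSequence n (tailProdFeedback n t) s) (m : ℕ) :
    ∃ a, m ≤ a ∧ a ≤ m + n ∧ s a = 0 := by
  by_cases hne : ∀ i, t ≤ i → i < n → s (m + i) ≠ 0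
  · exact ⟨m + n, by omega, le_rfl, (hs.add_eq_zero_iff m).2 hne⟩
  · push Not at hne
    obtain ⟨i, -, hin, hi⟩ := hne
    exact ⟨m + i, by omega, by omega, hi⟩

lemma IsFSRSequence.add_ne_zero_of_eq_zero (hs : IsFSRSequence n (tailProdFeedback n t) s)
    {a d : ℕ} (ha : s a = 0) (hna : n ≤ a) (hd : 0 < d) (hdt : d ≤ n - t) : s (a + d) ≠ 0 := by
  intro had
  rw [show a + d = a + d - n + n by omega, hs.add_eq_zero_iff] at had
  exact had (n - d) (by omega) (by omega) (by rwa [show a + d - n + (n - d) = a by omega])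

lemma IsFSRSequence.add_period_eq_zero (hs : IsFSRSequence n (tailProdFeedback n t) s)
    {a : ℕ} (ha : s a = 0) (hna : n ≤ a) : s (a + (n - t + 1)) = 0 := by
  rw [show a + (n - t + 1) = a + (n - t + 1) - n + n by omega, hs.add_eq_zero_iff]
  intro i hti hin
  rw [show a + (n - t + 1) - n + i = a + (i + 1 - t) by omega]
  exact hs.add_ne_zero_of_eq_zero ha hna (by omega) (by omega)

lemma IsFSRSequence.add_eq_zeroOnesSeq (hs : IsFSRSequence n (tailProdFeedback n t) s)
    {a : ℕ} (ha : s a = 0) (hna : n ≤ a) (d : ℕ) : s (a + d) = zeroOnesSeq (n - t + 1) d := by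
  set p := n - t + 1
  have hzero : ∀ j, s (a + p * j) = 0 := by
    intro j
    induction j with
    | zero => exact ha
    | succ j ih =>
      rw [mul_add_one, ← add_assoc]
      exact hs.add_period_eq_zero ih (by omega)
  rw [← Nat.div_add_mod d p, ← add_assoc, zeroOnesSeq, Nat.mul_add_mod_self_left, Nat.mod_mod]
  split_ifs with hd
  · rw [hd, add_zero, hzero]
  · have hlt := Nat.mod_lt d (show 0 < p by omega)
    exact Fin.eq_one_of_ne_zero _
      (hs.add_ne_zero_of_eq_zero (hzero _) (by omega) (by omega) (by omega))

lemma IsFSRSequence.exists_forall_add_eq_zeroOnesSeq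
    (hs : IsFSRSequence n (tailProdFeedback n t) s) :
    ∃ a, ∀ d, s (a + d) = zeroOnesSeq (n - t + 1) d := by
  obtain ⟨a, hna, -, ha⟩ := hs.exists_eq_zero n
  exact ⟨a, hs.add_eq_zeroOnesSeq ha hna⟩

lemma isFSRSequence_zeroOnesSeq (n t : ℕ) :
    IsFSRSequence n (tailProdFeedback n t) (zeroOnesSeq (n - t + 1)) := by
  intro m
  have eq_of_eq_zero_iff : ∀ a b : ZMod 2, (a = 0 ↔ b = 0) → a = b := by decide
  apply eq_of_eq_zero_iff
  simp only [zeroOnesSeq_eq_zero_iff, tailProdFeedback_eq_zero_iff, seqWindow, ne_eq]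
  constructor
  · intro hmn i hti hmi
    have hni : m + n - (m + i) = n - i := by omega
    have := Nat.eq_zero_of_dvd_of_lt (hni ▸ Nat.dvd_sub hmn hmi) (by omega)
    omega
  · intro h
    by_contra hmn
    have hr := Nat.mod_lt (m + n) (show 0 < n - t + 1 by omega)
    have hr0 : (m + n) % (n - t + 1) ≠ 0 := fun h0 => hmn (Nat.dvd_of_mod_eq_zero h0)
    -- the multiple of `n - t + 1` just below `m + n` lies among the positions `m + t, …, m + n - 1`
    refine h ⟨n - (m + n) % (n - t + 1), by omega⟩ (by simp only; omega) ?_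
    have hmi : m + (n - (m + n) % (n - t + 1)) = m + n - (m + n) % (n - t + 1) := by omega
    simpa only [hmi] using Nat.dvd_sub_mod (m + n)

end TailProduct

section EventualCycle

variable {n t : ℕ} [NeZero n]

lemma exists_iterate_stateMap_tailProdFeedback_eq (x : Fin n → ZMod 2) :
    ∃ a, ∀ c, (stateMap n (tailProdFeedback n t))^[a + c] x =
      seqWindow n (zeroOnesSeq (n - t + 1)) c := by
  obtain ⟨a, ha⟩ :=
    (isFSRSequence_outputSeq (f := tailProdFeedback n t) x).exists_forall_add_eq_zeroOnesSeq
  refine ⟨a, fun c => ?_⟩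
  rw [← seqWindow_outputSeq]
  funext i
  simp only [seqWindow, add_assoc, ha]

lemma eq_seqWindow_zeroOnesSeq_of_isPeriodicPt {x : Fin n → ZMod 2} {k : ℕ} (hk : 0 < k)
    (hx : IsPeriodicPt (stateMap n (tailProdFeedback n t)) k x) :
    ∃ c, x = seqWindow n (zeroOnesSeq (n - t + 1)) c := by
  obtain ⟨a, ha⟩ := exists_iterate_stateMap_tailProdFeedback_eq (t := t) x
  refine ⟨k * a - a, ?_⟩
  rw [← ha, Nat.add_sub_cancel' (Nat.le_mul_of_pos_left a hk), (hx.mul_const a).eq]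

end EventualCycle

theorem stmt6_general (n t : ℕ) (ht : t < n) :
    let f : (Fin n → ZMod 2) → ZMod 2 :=
      fun x => 1 + ∏ i : Fin n, (if t ≤ (i : ℕ) then x i else 1)
    let window : ℕ → (Fin n → ZMod 2) :=
      fun k => fun i : Fin n => zeroOnesSeq (n - t + 1) (k + (i : ℕ))
    -- the periodic states are exactly the n-stage states of (0, 1^{n-t})
    ({x : Fin n → ZMod 2 | ∃ k : ℕ, 0 < k ∧ (stateMap n f)^[k] x = x} =
      {x : Fin n → ZMod 2 | ∃ k : ℕ, x = window k}) ∧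
    -- they form a single directed cycle of length n - t + 1
    (∀ k : ℕ, stateMap n f (window k) = window (k + 1)) ∧
    Function.minimalPeriod (stateMap n f) (window 0) = n - t + 1 := by
  intro f window
  have : NeZero n := ⟨by omega⟩
  have hZ : IsFSRSequence n f (zeroOnesSeq (n - t + 1)) := isFSRSequence_zeroOnesSeq n t
  refine ⟨?_, hZ.stateMap_seqWindow, hZ.minimalPeriod_seqWindow_zeroOnesSeq⟩
  ext x
  constructor
  · rintro ⟨k, hk, hx⟩
    exact eq_seqWindow_zeroOnesSeq_of_isPeriodicPt hk hx
  · rintro ⟨k, rfl⟩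
    exact ⟨n - t + 1, by omega, hZ.isPeriodicPt_seqWindow (zeroOnesSeq_periodic _) k⟩

theorem stmt6 (n t : ℕ) (hn : 2 ≤ n) (ht0 : 0 < t) (ht : t < n) :
    let f : (Fin n → ZMod 2) → ZMod 2 :=
      fun x => 1 + ∏ i : Fin n, (if t ≤ (i : ℕ) then x i else 1)
    let window : ℕ → (Fin n → ZMod 2) :=
      fun k => fun i : Fin n => zeroOnesSeq (n - t + 1) (k + (i : ℕ))
    -- the periodic states are exactly the n-stage states of (0, 1^{n-t})
    ({x : Fin n → ZMod 2 | ∃ k : ℕ, 0 < k ∧ (stateMap n f)^[k] x = x} =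
      {x : Fin n → ZMod 2 | ∃ k : ℕ, x = window k}) ∧
    -- they form a single directed cycle of length n - t + 1
    (∀ k : ℕ, stateMap n f (window k) = window (k + 1)) ∧
    Function.minimalPeriod (stateMap n f) (window 0) = n - t + 1 :=
  stmt6_general n t ht
end

section
/- For n ≥ 4, let f(x_0,...,x_{n-1}) = 1 + x_{n-3} + x_{n-1} + x_{n-3}·x_{n-2} + x_{n-2}·x_{n-1} + x_{n-3}·x_{n-2}·x_{n-1} over F_2. Then the periodic states of the state map of f form a single directed cycle of length 4 consisting exactly of the n-stage states of the periodic sequence (1,1,1,0). -/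
/-- The periodic binary sequence `(1,1,1,0)` of period `4`. -/
def seq1110 (i : ℕ) : ZMod 2 := if i % 4 = 3 then 0 else 1

/-!
Since `f` reads only the last three coordinates, the output sequence of every state obeys, from
index `n - 3` on, the three-term recurrence `u (j + 3) = feedback3 (u j) (u (j + 1)) (u (j + 2))`.
On the eight triples, four steps of this recurrence always reach the cycle of `(1,1,1,0)`, so
after `n + 1` steps every state is a window of `(1,1,1,0)`. A periodic
state lies in the image of every iterate of the state map, hence is such a window.
-/

open Function

def feedback3 (a b c : ZMod 2) : ZMod 2 := 1 + a + c + a * b + b * c + a * b * c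

def step3 (p : ZMod 2 × ZMod 2 × ZMod 2) : ZMod 2 × ZMod 2 × ZMod 2 :=
  (p.2.1, p.2.2, feedback3 p.1 p.2.1 p.2.2)

def IsFeedbackSeq (u : ℕ → ZMod 2) : Prop :=
  ∀ j, u (j + 3) = feedback3 (u j) (u (j + 1)) (u (j + 2))

theorem seq1110_add_four (j : ℕ) : seq1110 (j + 4) = seq1110 j := by
  simp [seq1110]

theorem isFeedbackSeq_seq1110 : IsFeedbackSeq seq1110 := by
  intro j
  have := Nat.mod_lt j (by norm_num : 4 > 0)
  interval_cases h : j % 4 <;> simp [seq1110, Nat.add_mod j, h] <;> decide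

theorem step3_iterate_four (p : ZMod 2 × ZMod 2 × ZMod 2) :
    ∃ m : Fin 4, step3^[4] p = (seq1110 m, seq1110 (m + 1), seq1110 (m + 2)) := by
  revert p
  decide

namespace IsFeedbackSeq

variable {u w : ℕ → ZMod 2}

theorem shift (hu : IsFeedbackSeq u) (k : ℕ) : IsFeedbackSeq fun j => u (k + j) := fun j => by
  simpa only [← add_assoc] using hu (k + j)

theorem step3_iterate (hu : IsFeedbackSeq u) (j : ℕ) :
    step3^[j] (u 0, u 1, u 2) = (u j, u (j + 1), u (j + 2)) := by
  induction j with
  | zero => rfl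
  | succ j ih => rw [iterate_succ_apply', ih, step3, ← hu j]

theorem ext (hu : IsFeedbackSeq u) (hw : IsFeedbackSeq w)
    (h : (u 0, u 1, u 2) = (w 0, w 1, w 2)) : u = w := funext fun j => by
  have := hu.step3_iterate j
  rw [h, hw.step3_iterate j] at this
  exact (Prod.mk.inj this).1.symm

theorem exists_eq_seq1110 (hu : IsFeedbackSeq u) : ∃ m, ∀ i, u (4 + i) = seq1110 (m + i) := by
  obtain ⟨m, hm⟩ := step3_iterate_four (u 0, u 1, u 2)
  refine ⟨m, congrFun ((hu.shift 4).ext (isFeedbackSeq_seq1110.shift m) ?_)⟩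
  simpa [hu.step3_iterate] using hm

end IsFeedbackSeq

def window (n : ℕ) (u : ℕ → ZMod 2) (k : ℕ) : Fin n → ZMod 2 := fun i => u (k + i)

section StateMap

variable {n : ℕ} {f : (Fin n → ZMod 2) → ZMod 2} {u : ℕ → ZMod 2}

theorem stateMap_window {k : ℕ} (h : u (k + n) = f (window n u k)) :
    stateMap n f (window n u k) = window n u (k + 1) := by
  funext i
  simp only [stateMap, window]
  split_ifs with hi
  · rw [add_assoc, add_comm 1]
  · rw [← h]
    congr 1
    omega

theorem exists_iterate_stateMap_eq_window (x : Fin n → ZMod 2) :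
    ∃ u : ℕ → ZMod 2, (∀ k, u (k + n) = f (window n u k)) ∧
      ∀ m, (stateMap n f)^[m] x = window n u m := by
  let u : ℕ → ZMod 2 := fun m => if h : m < n then x ⟨m, h⟩ else f ((stateMap n f)^[m - n] x)
  have hu : ∀ k, u (k + n) = f ((stateMap n f)^[k] x) := fun k => by simp [u]
  have key : ∀ m, (stateMap n f)^[m] x = window n u m := by
    intro m
    induction m with
    | zero => funext i; simp [u, window]
    | succ m ih => rw [iterate_succ_apply', ih, stateMap_window (by rw [hu, ih])]
  exact ⟨u, fun k => by rw [hu, key], key⟩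

variable (hn : 3 ≤ n)
  (hf : ∀ x, f x = feedback3 (x ⟨n - 3, by omega⟩) (x ⟨n - 2, by omega⟩) (x ⟨n - 1, by omega⟩))
include hn hf

theorem isFeedbackSeq_of_window (h : ∀ k, u (k + n) = f (window n u k)) :
    IsFeedbackSeq fun j => u (n - 3 + j) := fun j => by
  dsimp only
  rw [show n - 3 + (j + 3) = j + n by omega, h, hf]
  simp only [window]
  congr 2 <;> omega

theorem IsFeedbackSeq.window_add (hu : IsFeedbackSeq u) (k : ℕ) : u (k + n) = f (window n u k) := by
  rw [show k + n = k + (n - 3) + 3 by omega, hu, hf]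
  simp only [window]
  congr 2 <;> omega

theorem stateMap_window_seq1110 (k : ℕ) :
    stateMap n f (window n seq1110 k) = window n seq1110 (k + 1) :=
  stateMap_window (isFeedbackSeq_seq1110.window_add hn hf k)

theorem iterate_stateMap_window_seq1110 (k m : ℕ) :
    (stateMap n f)^[m] (window n seq1110 k) = window n seq1110 (k + m) := by
  have : Semiconj (window n seq1110) Nat.succ (stateMap n f) := fun k =>
    (stateMap_window_seq1110 hn hf k).symm
  simpa [Nat.succ_iterate] using (this.iterate_right m k).symm

theorem exists_iterate_stateMap_eq_window_seq1110 (x : Fin n → ZMod 2) :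
    ∃ m, (stateMap n f)^[n + 1] x = window n seq1110 m := by
  obtain ⟨u, hrec, hu⟩ := exists_iterate_stateMap_eq_window x
  obtain ⟨m, hm⟩ := (isFeedbackSeq_of_window hn hf hrec).exists_eq_seq1110
  refine ⟨m, (hu (n + 1)).trans (funext fun i => ?_)⟩
  simpa [window, show n - 3 + (4 + i) = n + 1 + i by omega] using hm i

theorem mem_periodicPts_stateMap_iff (x : Fin n → ZMod 2) :
    x ∈ periodicPts (stateMap n f) ↔ ∃ k, x = window n seq1110 k := by
  constructor
  · intro hx
    obtain ⟨k, hk, hper⟩ := mem_periodicPts.1 hx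
    obtain ⟨y, rfl⟩ := periodicPts_subset_range (mk_mem_periodicPts hk (hper.iterate (n + 1)))
    exact exists_iterate_stateMap_eq_window_seq1110 hn hf y
  · rintro ⟨k, rfl⟩
    refine mk_mem_periodicPts (n := 4) (by norm_num) ?_
    rw [IsPeriodicPt, IsFixedPt, iterate_stateMap_window_seq1110 hn hf]
    funext i
    simp only [window, add_right_comm k 4, seq1110_add_four]

theorem minimalPeriod_stateMap_window_seq1110 :
    minimalPeriod (stateMap n f) (window n seq1110 0) = 4 := by
  refine minimalPeriod_eq_prime_pow (p := 2) (k := 1) ?_ ?_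
  · rw [IsPeriodicPt, IsFixedPt, iterate_stateMap_window_seq1110 hn hf]
    intro h
    have := congrFun h ⟨1, by omega⟩
    simp [window, seq1110] at this
  · rw [IsPeriodicPt, IsFixedPt, iterate_stateMap_window_seq1110 hn hf]
    funext i
    simp [window, seq1110]

end StateMap

theorem stmt7 (n : ℕ) (hn : 4 ≤ n) :
    let f : (Fin n → ZMod 2) → ZMod 2 := fun x =>
      1 + x ⟨n - 3, by omega⟩ + x ⟨n - 1, by omega⟩
        + x ⟨n - 3, by omega⟩ * x ⟨n - 2, by omega⟩
        + x ⟨n - 2, by omega⟩ * x ⟨n - 1, by omega⟩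
        + x ⟨n - 3, by omega⟩ * x ⟨n - 2, by omega⟩ * x ⟨n - 1, by omega⟩
    let window : ℕ → (Fin n → ZMod 2) :=
      fun k => fun i : Fin n => seq1110 (k + (i : ℕ))
    -- the periodic states are exactly the n-stage states of (1,1,1,0)
    ({x : Fin n → ZMod 2 | ∃ k : ℕ, 0 < k ∧ (stateMap n f)^[k] x = x} =
      {x : Fin n → ZMod 2 | ∃ k : ℕ, x = window k}) ∧
    -- they form a single directed cycle of length 4
    (∀ k : ℕ, stateMap n f (window k) = window (k + 1)) ∧
    Function.minimalPeriod (stateMap n f) (window 0) = 4 := by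
  intro f _
  have hn3 : 3 ≤ n := by omega
  have hf : ∀ x, f x =
      feedback3 (x ⟨n - 3, by omega⟩) (x ⟨n - 2, by omega⟩) (x ⟨n - 1, by omega⟩) := fun _ => rfl
  refine ⟨Set.ext fun x => ?_, stateMap_window_seq1110 hn3 hf,
    minimalPeriod_stateMap_window_seq1110 hn3 hf⟩
  exact mem_periodicPts.symm.trans (mem_periodicPts_stateMap_iff hn3 hf x)
end
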